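/- Let p_1,…,p_d be natural numbers, each not divisible by 2, not divisible by 3 and not equal to 1, and pairwise coprime (gcd(p_i,p_j) = 1 for i ≠ j). Then for any choice of integers n_i with 1 ≤ n_i ≤ p_i − 1 for each i, one has Σ_{i=1}^d cos(π n_i / p_i) ≠ 0. -/

import Mathlib

/-!
Reduce each `n_i / p_i` to lowest terms `m_i / q_i`; then every `q_i ≥ 5` is odd, and the
`q_i` are pairwise coprime. Writing `2 cos (π m_i / q_i) = ζ^{a_i} + ζ^{-a_i}` for a primitive
`M`-th root of unity `ζ`, `M = 2 ∏ q_i`, the Galois conjugation `ζ ↦ ζ^k` (`k` prime to `M`)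
sends a vanishing sum of these cosines to the vanishing sum of the `cos (π k m_i / q_i)`.
By the Chinese remainder theorem, `k` can be chosen so that `k m_i ≡ 2` or `k m_i ≡ -1`
modulo `2 q_i` for every `i`, making every conjugated cosine positive.
-/

open Real Finset Function IntermediateField

theorem IsPrimitiveRoot.exists_algHom_adjoin_gen_eq_pow {K : Type*} [Field K] [CharZero K]
    {ζ : K} {M : ℕ} (hζ : IsPrimitiveRoot ζ M) (hM : 0 < M) {k : ℕ} (hk : k.Coprime M) :
    ∃ σ : ℚ⟮ζ⟯ →ₐ[ℚ] K, σ (AdjoinSimple.gen ℚ ζ) = ζ ^ k := by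
  have hint : IsIntegral ℚ ζ := (hζ.isIntegral hM).tower_top
  have hroot : ζ ^ k ∈ (minpoly ℚ ζ).aroots K := by
    rw [← Polynomial.cyclotomic_eq_minpoly_rat hζ hM, Polynomial.mem_aroots,
      Polynomial.aeval_def, Polynomial.eval₂_eq_eval_map, Polynomial.map_cyclotomic]
    exact ⟨Polynomial.cyclotomic_ne_zero M ℚ, (hζ.pow_of_coprime k hk).isRoot_cyclotomic hM⟩
  exact ⟨(algHomAdjoinIntegralEquiv ℚ hint).symm ⟨ζ ^ k, hroot⟩,
    algHomAdjoinIntegralEquiv_symm_apply_gen ℚ hint _⟩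

theorem Complex.exp_mul_I_zpow_add_zpow_neg (θ : ℝ) (a : ℤ) :
    Complex.exp (θ * Complex.I) ^ a + Complex.exp (θ * Complex.I) ^ (-a) =
      ((2 * Real.cos (a * θ) : ℝ) : ℂ) := by
  rw [← Complex.exp_int_mul, ← Complex.exp_int_mul]
  push_cast
  rw [Complex.two_cos]
  ring_nf

theorem sum_cos_two_pi_mul_div_eq_zero_of_coprime {ι : Type*} (s : Finset ι) {M k : ℕ}
    (hM : 0 < M) (hk : k.Coprime M) (a : ι → ℤ)
    (h : ∑ i ∈ s, cos (2 * π * a i / M) = 0) :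
    ∑ i ∈ s, cos (2 * π * (k * a i) / M) = 0 := by
  set ζ := Complex.exp (↑(2 * π / M) * Complex.I) with hζ_def
  have hζ : IsPrimitiveRoot ζ M := by
    convert Complex.isPrimitiveRoot_exp M hM.ne' using 2
    push_cast
    ring
  obtain ⟨σ, hσ⟩ := hζ.exists_algHom_adjoin_gen_eq_pow hM hk
  set x := AdjoinSimple.gen ℚ ζ
  set y : ℚ⟮ζ⟯ := ∑ i ∈ s, (x ^ a i + x ^ (-a i))
  have hy (τ : ℚ⟮ζ⟯ →+* ℂ) (j : ℤ) (hτ : τ x = ζ ^ j) :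
      τ y = ((2 * ∑ i ∈ s, cos (2 * π * (j * a i) / M) : ℝ) : ℂ) := by
    rw [mul_sum, Complex.ofReal_sum, map_sum]
    refine sum_congr rfl fun i _ ↦ ?_
    rw [map_add, map_zpow₀, map_zpow₀, hτ, ← zpow_mul, ← zpow_mul, mul_neg, hζ_def,
      Complex.exp_mul_I_zpow_add_zpow_neg]
    congr 3
    push_cast
    ring
  have hy0 : y = 0 := (algebraMap ℚ⟮ζ⟯ ℂ).injective <| by
    rw [hy _ 1 (by simp [x]), map_zero]
    simp [h]
  have hσy := hy σ k (by simpa using hσ)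
  rw [hy0, map_zero, eq_comm, Complex.ofReal_eq_zero] at hσy
  simpa using hσy

theorem sum_cos_pi_mul_div_eq_zero_of_coprime {ι : Type*} (s : Finset ι) {q : ι → ℕ}
    (hq : ∀ i ∈ s, q i ≠ 0) {k : ℕ} (hk : k.Coprime (2 * ∏ i ∈ s, q i)) (x : ι → ℤ)
    (h : ∑ i ∈ s, cos (π * x i / q i) = 0) :
    ∑ i ∈ s, cos (π * (k * x i) / q i) = 0 := by
  have hdvd : ∀ i ∈ s, q i ∣ ∏ j ∈ s, q j := fun i hi ↦ dvd_prod_of_mem q hi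
  have hQ : ∏ i ∈ s, q i ≠ 0 := prod_ne_zero_iff.mpr hq
  generalize ∏ i ∈ s, q i = Q at hk hdvd hQ
  have hangle : ∀ i ∈ s, ∀ y : ℝ,
      2 * π * (y * ((Q / q i : ℕ) : ℝ)) / ((2 * Q : ℕ) : ℝ) = π * y / q i := by
    intro i hi y
    have hqi : (q i : ℝ) ≠ 0 := Nat.cast_ne_zero.mpr (hq i hi)
    rw [Nat.cast_div (hdvd i hi) hqi]
    push_cast
    field_simp
  have key := sum_cos_two_pi_mul_div_eq_zero_of_coprime s (by omega) hk
    (fun i ↦ x i * (Q / q i : ℕ))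
  simp only [Int.cast_mul, Int.cast_natCast] at key
  rw [sum_congr rfl fun i hi ↦ by rw [hangle i hi]] at key
  rw [← key h]
  exact sum_congr rfl fun i hi ↦ by rw [← mul_assoc (k : ℝ), hangle i hi]

theorem exists_coprime_natCast_div_eq {n p : ℕ} (hn : 0 < n) (hnp : n < p) :
    ∃ m q : ℕ, q ∣ p ∧ 0 < m ∧ m < q ∧ m.Coprime q ∧ (n : ℝ) / p = m / q := by
  obtain ⟨g, m, q, hg, hmq, rfl, rfl⟩ := Nat.exists_coprime' (Nat.gcd_pos_of_pos_left p hn)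
  refine ⟨m, q, Dvd.intro_left g (mul_comm g q), Nat.pos_of_mul_pos_right hn,
    Nat.lt_of_mul_lt_mul_right hnp, hmq, ?_⟩
  have hg' : (g : ℝ) ≠ 0 := by positivity
  push_cast
  rw [mul_div_mul_right _ _ hg']

theorem exists_odd_natCast_eq_forall {ι : Type*} [Fintype ι] {q : ι → ℕ}
    (hq : ∀ i, Odd (q i)) (hcop : Pairwise (Nat.Coprime on q)) (t : ∀ i, ZMod (q i)) :
    ∃ k : ℕ, Odd k ∧ ∀ i, (k : ZMod (q i)) = t i := by
  have hq0 (i : ι) : q i ≠ 0 := (hq i).pos.ne'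
  let s : Option ι → ℕ := fun o ↦ o.elim 2 q
  let a : Option ι → ℕ := fun o ↦ o.elim 1 fun i ↦ (t i).val
  have hs : ∀ o ∈ (univ : Finset (Option ι)), s o ≠ 0 := by
    rintro (_ | i) - <;> simp [s, hq0]
  have hcop' : (↑(univ : Finset (Option ι)) : Set (Option ι)).Pairwise (Nat.Coprime on s) := by
    rintro (_ | i) - (_ | j) - hij
    · exact absurd rfl hij
    · simpa [s, Function.onFun] using hq j
    · simpa [s, Function.onFun] using hq i
    · exact hcop (fun h ↦ hij (congrArg some h))
  obtain ⟨k, hk⟩ := Nat.chineseRemainderOfFinset a s univ hs hcop'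
  refine ⟨k, Nat.odd_iff.mpr (hk none (mem_univ _)), fun i ↦ ?_⟩
  have : NeZero (q i) := ⟨hq0 i⟩
  rw [← ZMod.natCast_zmod_val (t i), ZMod.natCast_eq_natCast_iff]
  exact hk (some i) (mem_univ _)

theorem exists_coprime_mul_modEq {ι : Type*} [Fintype ι] {q : ι → ℕ}
    (hq : ∀ i, Odd (q i)) (hcop : Pairwise (Nat.Coprime on q)) {m : ι → ℕ}
    (hm : ∀ i, (m i).Coprime (q i)) {c : ι → ℤ} (hc2 : ∀ i, c i ≡ m i [ZMOD 2])
    (hcq : ∀ i, IsUnit (c i : ZMod (q i))) :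
    ∃ k : ℕ, k.Coprime (2 * ∏ i, q i) ∧ ∀ i, k * m i ≡ c i [ZMOD 2 * q i] := by
  obtain ⟨k, hk, hkt⟩ := exists_odd_natCast_eq_forall hq hcop
    fun i ↦ (c i : ZMod (q i)) * (m i : ZMod (q i))⁻¹
  have hkm (i : ι) : ((k * m i : ℤ) : ZMod (q i)) = c i := by
    push_cast
    rw [hkt, mul_assoc, ZMod.inv_mul_of_unit _ ((ZMod.isUnit_iff_coprime _ _).mpr (hm i)),
      mul_one]
  refine ⟨k, Nat.Coprime.mul_right (Nat.coprime_two_right.mpr hk)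
    (Nat.Coprime.prod_right fun i _ ↦ ?_), fun i ↦ ?_⟩
  · rw [← ZMod.isUnit_iff_coprime]
    refine isUnit_of_mul_isUnit_left (y := (m i : ZMod (q i))) ?_
    exact_mod_cast (hkm i).symm ▸ hcq i
  · have hmod2 : (k * m i : ℤ) ≡ c i [ZMOD 2] := by
      refine Int.ModEq.trans ?_ (hc2 i).symm
      have hk1 : (k : ℤ) ≡ 1 [ZMOD 2] := by
        obtain ⟨r, rfl⟩ := hk
        simp [Int.ModEq]
      simpa using hk1.mul_right (m i : ℤ)
    refine (Int.modEq_and_modEq_iff_modEq_mul ?_).mp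
      ⟨hmod2, (ZMod.intCast_eq_intCast_iff _ _ _).mp (hkm i)⟩
    simpa using hq i

theorem exists_coprime_mul_modEq_two_or_neg_one {ι : Type*} [Fintype ι] {q : ι → ℕ}
    (hq : ∀ i, Odd (q i)) (hcop : Pairwise (Nat.Coprime on q)) {m : ι → ℕ}
    (hm : ∀ i, (m i).Coprime (q i)) :
    ∃ k : ℕ, k.Coprime (2 * ∏ i, q i) ∧
      ∀ i, k * m i ≡ 2 [ZMOD 2 * q i] ∨ k * m i ≡ -1 [ZMOD 2 * q i] := by
  set c : ι → ℤ := fun i ↦ if Even (m i) then 2 else -1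
  have hc2 (i : ι) : c i ≡ m i [ZMOD 2] := by
    simp only [c]
    split_ifs with he
    · obtain ⟨r, hr⟩ := he
      simp only [Int.ModEq, hr]
      omega
    · obtain ⟨r, hr⟩ := Nat.not_even_iff_odd.mp he
      simp only [Int.ModEq, hr]
      omega
  have hcq (i : ι) : IsUnit (c i : ZMod (q i)) := by
    simp only [c]
    split_ifs
    · exact_mod_cast (ZMod.isUnit_iff_coprime 2 (q i)).mpr (Nat.coprime_two_left.mpr (hq i))
    · simp
  obtain ⟨k, hk, hkm⟩ := exists_coprime_mul_modEq hq hcop hm hc2 hcq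
  refine ⟨k, hk, fun i ↦ ?_⟩
  have := hkm i
  simp only [c] at this
  split_ifs at this
  exacts [.inl this, .inr this]

theorem cos_pi_mul_div_congr {q : ℕ} {x y : ℤ} (hxy : x ≡ y [ZMOD 2 * q]) :
    cos (π * x / q) = cos (π * y / q) := by
  rcases eq_or_ne q 0 with rfl | hq
  · simp
  obtain ⟨t, ht⟩ := hxy.symm.dvd
  have hq' : (q : ℝ) ≠ 0 := Nat.cast_ne_zero.mpr hq
  have hx : (x : ℝ) = y + 2 * q * t := by
    rw [← Int.cast_natCast, ← Int.cast_ofNat, ← Int.cast_mul, ← Int.cast_mul, ← ht]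
    push_cast
    ring
  rw [hx, show π * (y + 2 * q * t) / q = π * y / q + t * (2 * π) by field_simp,
    cos_add_int_mul_two_pi]

theorem cos_pi_mul_div_pos_of_modEq {q : ℕ} (hq : 4 < q) {x : ℤ}
    (hx : x ≡ 2 [ZMOD 2 * q] ∨ x ≡ -1 [ZMOD 2 * q]) : 0 < cos (π * x / q) := by
  have hq' : (4 : ℝ) < q := by exact_mod_cast hq
  have hqpos : (0 : ℝ) < q := by linarith
  have hπ := pi_pos
  rcases hx with hx | hx
  · rw [cos_pi_mul_div_congr hx]
    refine cos_pos_of_mem_Ioo ⟨by push_cast; linarith [show 0 < π * 2 / q by positivity], ?_⟩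
    rw [Int.cast_ofNat, div_lt_div_iff₀ hqpos two_pos]
    nlinarith
  · rw [cos_pi_mul_div_congr hx, Int.cast_neg, Int.cast_one, mul_neg_one, neg_div, cos_neg]
    refine cos_pos_of_mem_Ioo ⟨by linarith [show 0 < π / q by positivity], ?_⟩
    rw [div_lt_div_iff₀ hqpos two_pos]
    nlinarith

theorem stmt_1 (d : ℕ) (hd : 1 ≤ d) (p : Fin d → ℕ)
    (hp2 : ∀ i, ¬ (2 ∣ p i)) (hp3 : ∀ i, ¬ (3 ∣ p i))
    (hcop : ∀ i j, i ≠ j → Nat.Coprime (p i) (p j))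
    (n : Fin d → ℕ) (hn : ∀ i, 1 ≤ n i ∧ n i ≤ p i - 1) :
    (∑ i, Real.cos (π * n i / p i)) ≠ 0 := by
  have hnp (i : Fin d) : n i < p i := by
    have := (hn i).2; have : p i ≠ 0 := fun h ↦ hp2 i (h ▸ dvd_zero 2); omega
  choose m q hqp hm0 hmq hmq_cop hnm using fun i ↦ exists_coprime_natCast_div_eq (hn i).1 (hnp i)
  have hq2 (i : Fin d) : ¬ 2 ∣ q i := fun h ↦ hp2 i (h.trans (hqp i))
  have hq4 (i : Fin d) : 4 < q i := by
    have hq3 : ¬ 3 ∣ q i := fun h ↦ hp3 i (h.trans (hqp i))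
    by_contra! hle
    have := hq2 i; have := hm0 i; have := hmq i
    interval_cases q i <;> omega
  have hq_cop : Pairwise (Nat.Coprime on q) := fun i j hij ↦
    ((hcop i j hij).coprime_dvd_left (hqp i)).coprime_dvd_right (hqp j)
  obtain ⟨k, hk, hkm⟩ := exists_coprime_mul_modEq_two_or_neg_one
    (fun i ↦ Nat.odd_iff.mpr (by have := hq2 i; omega)) hq_cop hmq_cop
  intro h
  have h0 : ∑ i, cos (π * ((m i : ℤ) : ℝ) / q i) = 0 := by
    simpa [mul_div_assoc, hnm] using h
  have hk0 := sum_cos_pi_mul_div_eq_zero_of_coprime univ (fun i _ ↦ (hq4 i).ne_bot) hk _ h0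
  refine hk0.not_gt (sum_pos (fun i _ ↦ ?_) ⟨⟨0, hd⟩, mem_univ _⟩)
  exact_mod_cast cos_pi_mul_div_pos_of_modEq (hq4 i) (hkm i)
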